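/- arXiv:1501.00333 — 3 statements merged into one kernel-verified Lean document; each statement's English description precedes it below -/
import Mathlib

section
/- Let B be a finitely generated graded normal integral domain over C with B_0 = C, B_1 ≠ 0, and suppose the Hilbert function d ↦ dim_C B_d is eventually constant. Then B ≅ C[t] with t of degree 1, and in particular dim_C B_d = 1 for all d > 0. -/
open Polynomial

set_option maxHeartbeats 1000000


lemma aux_two_deg {B : Type} [CommRing B] [Algebra ℂ B] (ℬ : ℕ → Submodule ℂ B)
    [GradedAlgebra ℬ] {y : B} {i j : ℕ} (hi : y ∈ ℬ i) (hj : y ∈ ℬ j) (hij : i ≠ j) :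
    y = 0 := by
  have h1 := DirectSum.decompose_of_mem_same ℬ hj
  have h2 := DirectSum.decompose_of_mem_ne ℬ hi hij
  rw [← h1, h2]

lemma aux_fd {B : Type} [CommRing B] [Algebra ℂ B] (ℬ : ℕ → Submodule ℂ B) [GradedAlgebra ℬ]
    (hfg : Algebra.FiniteType ℂ B)
    (h0 : ℬ 0 = Submodule.span ℂ {1}) :
    ∀ N, FiniteDimensional ℂ (ℬ N) := by
  classical
  obtain ⟨s, hs⟩ := hfg
  set T : Finset (ℕ × B) :=
    s.biUnion (fun b => (DirectSum.decompose ℬ b).support.image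
      (fun i => (i, ((DirectSum.decompose ℬ b) i : B)))) with hT
  have hTmem : ∀ p ∈ T, p.2 ∈ ℬ p.1 := by
    intro p hp
    simp only [hT, Finset.mem_biUnion, Finset.mem_image] at hp
    obtain ⟨b, _, i, _, rfl⟩ := hp
    exact ((DirectSum.decompose ℬ b) i).2
  set X : Set B := ↑(T.image Prod.snd) with hX
  have hadj : Algebra.adjoin ℂ X = ⊤ := by
    rw [eq_top_iff, ← hs, Algebra.adjoin_le_iff]
    intro b hb
    have hb2 : b = ∑ i ∈ (DirectSum.decompose ℬ b).support, ((DirectSum.decompose ℬ b) i : B) :=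
      (DirectSum.sum_support_decompose ℬ b).symm
    rw [hb2]
    refine Subalgebra.sum_mem _ fun i hi => ?_
    apply Algebra.subset_adjoin
    simp only [hX, Finset.coe_image, Set.mem_image, Finset.mem_coe]
    refine ⟨(i, ((DirectSum.decompose ℬ b) i : B)), ?_, rfl⟩
    simp only [hT, Finset.mem_biUnion, Finset.mem_image]
    exact ⟨b, hb, i, hi, rfl⟩
  have hspan : Submodule.span ℂ ((Submonoid.closure X : Submonoid B) : Set B) = ⊤ := by
    have h := Algebra.adjoin_eq_span (R := ℂ) (s := X)
    rw [hadj, Algebra.top_toSubmodule] at h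
    exact h.symm
  -- shape of elements of the monoid closure
  have hshape : ∀ w ∈ Submonoid.closure X, ∃ m, w ∈ ℬ m ∧
      (w ∈ Submodule.span ℂ ({1} : Set B) ∨
        ∃ p ∈ T, 1 ≤ p.1 ∧ ∃ j, ∃ u ∈ ℬ j, w = p.2 * u ∧ m = p.1 + j) := by
    intro w hw
    induction hw using Submonoid.closure_induction with
    | one =>
      exact ⟨0, SetLike.one_mem_graded _, Or.inl (Submodule.mem_span_singleton_self 1)⟩
    | mem v hv =>
      obtain ⟨p, hp, rfl⟩ : ∃ p ∈ T, p.2 = v := by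
        simpa [hX, Finset.mem_image] using hv
      rcases Nat.eq_zero_or_pos p.1 with hz | hpos
      · refine ⟨0, ?_, Or.inl ?_⟩
        · have := hTmem p hp; rwa [hz] at this
        · have := hTmem p hp; rw [hz, h0] at this; exact this
      · exact ⟨p.1, hTmem p hp, Or.inr ⟨p, hp, hpos, 0, 1, SetLike.one_mem_graded _,
          (mul_one _).symm, (add_zero _).symm⟩⟩
    | mul v w hv hw ihv ihw =>
      obtain ⟨m, hm, hcase⟩ := ihv
      obtain ⟨m', hm', hcase'⟩ := ihw
      rcases hcase with h1 | ⟨p, hp, hp1, j, u, hu, rfl, rfl⟩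
      · rw [Submodule.mem_span_singleton] at h1
        obtain ⟨c, hc⟩ := h1
        rcases hcase' with h2 | ⟨p, hp, hp1, j, u, hu, rfl, rfl⟩
        · rw [Submodule.mem_span_singleton] at h2
          obtain ⟨c', hc'⟩ := h2
          refine ⟨0, ?_, Or.inl ?_⟩
          · rw [← hc, ← hc', smul_mul_smul_comm, mul_one]
            exact Submodule.smul_mem _ _ (SetLike.one_mem_graded _)
          · rw [Submodule.mem_span_singleton]
            exact ⟨c * c', by rw [← hc, ← hc', smul_mul_smul_comm, mul_one, mul_smul]⟩
        · refine ⟨p.1 + j, ?_, Or.inr ⟨p, hp, hp1, j, c • u, Submodule.smul_mem _ _ hu, ?_, rfl⟩⟩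
          · rw [← hc, smul_mul_assoc, one_mul]
            exact Submodule.smul_mem _ _ (SetLike.mul_mem_graded (hTmem p hp) hu)
          · rw [← hc, smul_mul_assoc, one_mul, mul_smul_comm]
      · refine ⟨p.1 + (j + m'), ?_, Or.inr ⟨p, hp, hp1, j + m', u * w, SetLike.mul_mem_graded hu hm',
          (mul_assoc _ _ _), rfl⟩⟩
        rw [mul_assoc]
        exact SetLike.mul_mem_graded (hTmem p hp) (SetLike.mul_mem_graded hu hm')
  -- the spanning submodule
  intro N
  induction N using Nat.strong_induction_on with
  | _ N IH =>
    rcases Nat.eq_zero_or_pos N with rfl | hN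
    · rw [h0]
      infer_instance
    · set G : Submodule ℂ B := Submodule.span ℂ ({1} : Set B) ⊔
        (T.filter (fun p => 1 ≤ p.1 ∧ p.1 ≤ N)).sup
          (fun p => (ℬ (N - p.1)).map (LinearMap.mulLeft ℂ p.2)) with hG
      have hle : ℬ N ≤ G := by
        intro w hwN
        have hw : w ∈ Submodule.span ℂ ((Submonoid.closure X : Submonoid B) : Set B) := by
          rw [hspan]; trivial
        have key : (GradedAlgebra.proj ℬ N) w ∈ G := by
          refine Submodule.span_induction ?_ ?_ ?_ ?_ hw
          · intro b hb
            obtain ⟨m, hbm, hcase⟩ := hshape b hb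
            rcases eq_or_ne m N with rfl | hne
            · rw [GradedAlgebra.proj_apply, DirectSum.decompose_of_mem_same ℬ hbm]
              rcases hcase with h1 | ⟨p, hp, hp1, j, u, hu, rfl, hmj⟩
              · exact Submodule.mem_sup_left h1
              · apply Submodule.mem_sup_right
                have hple : p.1 ≤ m := hmj ▸ Nat.le_add_right _ _
                have hmem : p ∈ T.filter (fun p => 1 ≤ p.1 ∧ p.1 ≤ m) :=
                  Finset.mem_filter.mpr ⟨hp, hp1, hple⟩
                have hsub := Finset.le_sup
                  (f := fun q => (ℬ (m - q.1)).map (LinearMap.mulLeft ℂ q.2)) hmem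
                apply hsub
                refine ⟨u, ?_, rfl⟩
                have hj : m - p.1 = j := by omega
                rwa [hj]
            · rw [GradedAlgebra.proj_apply, DirectSum.decompose_of_mem_ne ℬ hbm hne]
              exact G.zero_mem
          · simpa using G.zero_mem
          · intro a b _ _ ha hb
            rw [map_add]; exact G.add_mem ha hb
          · intro c a _ ha
            rw [map_smul]; exact G.smul_mem c ha
        rwa [GradedAlgebra.proj_apply, DirectSum.decompose_of_mem_same ℬ hwN] at key
      have : FiniteDimensional ℂ G := by
        rw [hG]
        have h1 : FiniteDimensional ℂ (Submodule.span ℂ ({1} : Set B)) := by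
          infer_instance
        have h2 : FiniteDimensional ℂ ((T.filter (fun p => 1 ≤ p.1 ∧ p.1 ≤ N)).sup
            (fun p => (ℬ (N - p.1)).map (LinearMap.mulLeft ℂ p.2)) : Submodule ℂ B) := by
          refine Finset.sup_induction (p := fun M : Submodule ℂ B => FiniteDimensional ℂ M) ?_ ?_ ?_
          · exact (inferInstance : FiniteDimensional ℂ (⊥ : Submodule ℂ B))
          · intro a ha b hb
            exact @Submodule.finiteDimensional_sup ℂ B _ _ _ a b ha hb
          · intro p hp
            have hp' := Finset.mem_filter.mp hp
            haveI : FiniteDimensional ℂ (ℬ (N - p.1)) := IH _ (by omega)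
            infer_instance
        infer_instance
      exact Submodule.finiteDimensional_of_le hle



lemma aux_alg_range {K : Type*} [Field K] [Algebra ℂ K] {t : K} (h : IsAlgebraic ℂ t) :
    ∃ c : ℂ, algebraMap ℂ K c = t := by
  have hint : IsIntegral ℂ t := h.isIntegral
  refine ⟨-(minpoly ℂ t).coeff 0, ?_⟩
  have hq : (minpoly ℂ t).leadingCoeff = 1 := minpoly.monic hint
  have hdeg : (minpoly ℂ t).degree = 1 :=
    IsAlgClosed.degree_eq_one_of_irreducible ℂ (minpoly.irreducible hint)
  have h0 : aeval t (minpoly ℂ t) = 0 := minpoly.aeval ℂ t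
  rw [eq_X_add_C_of_degree_eq_one hdeg, hq, C_1, one_mul, aeval_add, aeval_X, aeval_C,
    add_eq_zero_iff_eq_neg] at h0
  rw [map_neg, ← h0]

lemma aux_pow_li {K : Type*} [Field K] [Algebra ℂ K] {t : K} (h : Transcendental ℂ t) :
    LinearIndependent ℂ (fun i : ℕ => t ^ i) := by
  rw [transcendental_iff_injective] at h
  rw [linearIndependent_iff]
  intro l hl
  have key : aeval t (∑ i ∈ l.support, Polynomial.monomial i (l i)) = 0 := by
    rw [map_sum]
    rw [Finsupp.linearCombination_apply, Finsupp.sum] at hl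
    simpa [aeval_monomial, Algebra.smul_def] using hl
  have hp : (∑ i ∈ l.support, Polynomial.monomial i (l i)) = 0 := by
    exact h (a₂ := 0) (by rw [map_zero]; exact key)
  ext i
  by_cases hi : i ∈ l.support
  · have := congrArg (fun p => Polynomial.coeff p i) hp
    simpa [Polynomial.finset_sum_coeff, Polynomial.coeff_monomial,
      Finset.sum_ite_eq' l.support i] using this
  · simpa using hi

lemma aux_dep {B : Type} [CommRing B] [IsDomain B] [Algebra ℂ B]
    (ℬ : ℕ → Submodule ℂ B) [GradedAlgebra ℬ]
    (hfd : ∀ N, FiniteDimensional ℂ (ℬ N))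
    (hconst : ∃ D c : ℕ, ∀ d : ℕ, D ≤ d → Module.finrank ℂ (ℬ d) = c)
    {d : ℕ} (hd : 0 < d) {u v : B} (hu : u ∈ ℬ d) (hv : v ∈ ℬ d) :
    ¬ LinearIndependent ℂ ![u, v] := by
  intro hLI
  obtain ⟨D, c, hDc⟩ := hconst
  set K := FractionRing B
  have hinj : Function.Injective (algebraMap B K) := IsFractionRing.injective B K
  set U := algebraMap B K u with hU
  set V := algebraMap B K v with hV
  have hv0 : v ≠ 0 := by
    have := hLI.ne_zero 1
    simpa using this
  have hV0 : V ≠ 0 := fun h => hv0 (hinj (by rw [map_zero, ← hV]; exact h))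
  set t : K := U / V with ht
  have htrans : Transcendental ℂ t := by
    intro halg'
    obtain ⟨c0, hc0⟩ := aux_alg_range halg'
    have hUV : U = c0 • V := by
      rw [Algebra.smul_def, hc0, ht, div_mul_cancel₀ _ hV0]
    have huv : u = c0 • v := by
      apply hinj
      rw [Algebra.smul_def, map_mul, ← IsScalarTower.algebraMap_apply ℂ B K, ← Algebra.smul_def,
        ← hV, ← hU]
      exact hUV
    have := (LinearIndependent.pair_iff.mp hLI) 1 (-c0) (by
      rw [one_smul, neg_smul, huv]; ring)
    simpa using this.1
  -- the independent family of powers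
  set n : ℕ := D + c + 1 with hn
  set N : ℕ := n * d with hN
  have hw : ∀ i : Fin (n + 1), u ^ (i : ℕ) * v ^ (n - (i : ℕ)) ∈ ℬ N := by
    intro i
    have h1 : u ^ (i : ℕ) ∈ ℬ ((i : ℕ) • d) := SetLike.pow_mem_graded _ hu
    have h2 : v ^ (n - (i : ℕ)) ∈ ℬ ((n - (i : ℕ)) • d) := SetLike.pow_mem_graded _ hv
    have h3 := SetLike.mul_mem_graded h1 h2
    have he : (i : ℕ) • d + (n - (i : ℕ)) • d = N := by
      have hi : (i : ℕ) ≤ n := Nat.lt_succ_iff.mp i.2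
      simp only [smul_eq_mul, hN]
      rw [← add_mul]
      congr 1
      omega
    rwa [he] at h3
  have hli : LinearIndependent ℂ (fun i : Fin (n + 1) => u ^ (i : ℕ) * v ^ (n - (i : ℕ))) := by
    set L : B →ₗ[ℂ] K := (Algebra.linearMap B K).restrictScalars ℂ with hL
    have hLinj : Function.Injective L := hinj
    apply LinearIndependent.of_comp L
    have heq : (L ∘ fun i : Fin (n + 1) => u ^ (i : ℕ) * v ^ (n - (i : ℕ))) =
        fun i : Fin (n + 1) => (LinearMap.mulRight ℂ (V ^ n)) (t ^ (i : ℕ)) := by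
      funext i
      have hi : (i : ℕ) ≤ n := Nat.lt_succ_iff.mp i.2
      have hsplit : V ^ n = V ^ (i : ℕ) * V ^ (n - (i : ℕ)) := by
        rw [← pow_add]; congr 1; omega
      simp only [Function.comp_apply, hL, LinearMap.coe_restrictScalars,
        Algebra.linearMap_apply, LinearMap.mulRight_apply, map_mul, map_pow]
      rw [← hU, ← hV, ht, div_pow, hsplit, ← mul_assoc, div_mul_cancel₀ _ (pow_ne_zero _ hV0)]
    rw [heq]
    have hpows : LinearIndependent ℂ (fun i : Fin (n + 1) => t ^ (i : ℕ)) :=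
      (aux_pow_li htrans).comp (fun i : Fin (n + 1) => (i : ℕ)) Fin.val_injective
    exact hpows.map' (LinearMap.mulRight ℂ (V ^ n))
      (LinearMap.ker_eq_bot.mpr (fun a b hab => by
        have := mul_right_cancel₀ (pow_ne_zero n hV0) hab
        exact this))
  -- contradiction with finrank
  haveI := hfd N
  have hcard : Fintype.card (Fin (n + 1)) ≤ Module.finrank ℂ (ℬ N) := by
    have hliS : LinearIndependent ℂ
        (fun i : Fin (n + 1) => (⟨u ^ (i : ℕ) * v ^ (n - (i : ℕ)), hw i⟩ : ℬ N)) := by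
      apply LinearIndependent.of_comp (ℬ N).subtype
      exact hli
    exact hliS.fintype_card_le_finrank
  have hrk : Module.finrank ℂ (ℬ N) = c := hDc N (by
    have : n ≤ N := by
      have := Nat.mul_le_mul_left n hd
      simpa [hN] using this
    omega)
  rw [hrk, Fintype.card_fin] at hcard
  omega

/-- A finitely generated graded normal (integrally closed) integral
domain `B` over `ℂ` with `B₀ = ℂ`, `B₁ ≠ 0`, and eventually constant Hilbert
function is isomorphic as a graded `ℂ`-algebra to `ℂ[t]` with `t` of degree 1;
in particular `dim_ℂ B_d = 1` for all `d > 0`. -/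
theorem normal_graded_domain_eventually_constant_hilbert_iso_polynomial
    (B : Type) [CommRing B] [IsDomain B] [IsIntegrallyClosed B] [Algebra ℂ B]
    (ℬ : ℕ → Submodule ℂ B) [GradedAlgebra ℬ]
    (hfg : Algebra.FiniteType ℂ B)
    (h0 : ℬ 0 = Submodule.span ℂ {1})
    (h1 : ℬ 1 ≠ ⊥)
    (hconst : ∃ D c : ℕ, ∀ d : ℕ, D ≤ d → Module.finrank ℂ (ℬ d) = c) :
    (∃ e : B ≃ₐ[ℂ] ℂ[X],
      ∀ d : ℕ, (ℬ d).map e.toLinearMap = Submodule.span ℂ {(X : ℂ[X]) ^ d}) ∧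
    ∀ d : ℕ, 0 < d → Module.finrank ℂ (ℬ d) = 1 := by
  classical
  have hfd := aux_fd ℬ hfg h0
  obtain ⟨x, hx1, hx0⟩ : ∃ x, x ∈ ℬ 1 ∧ x ≠ 0 := by
    by_contra hc
    push_neg at hc
    apply h1
    rw [eq_bot_iff]
    intro y hy
    exact hc y hy
  have hxd : ∀ d : ℕ, x ^ d ∈ ℬ d := by
    intro d
    have := SetLike.pow_mem_graded d hx1
    simpa using this
  have hxdne : ∀ d : ℕ, x ^ d ≠ 0 := fun d => pow_ne_zero d hx0
  have hspan : ∀ d : ℕ, ℬ d = Submodule.span ℂ {x ^ d} := by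
    intro d
    rcases Nat.eq_zero_or_pos d with rfl | hdpos
    · rw [pow_zero]; exact h0
    · refine le_antisymm ?_ ?_
      · intro u hu
        have hdep := aux_dep ℬ hfd hconst hdpos hu (hxd d)
        rw [LinearIndependent.pair_iff] at hdep
        push_neg at hdep
        obtain ⟨s, r, hsr, hne⟩ := hdep
        rcases eq_or_ne s 0 with rfl | hs
        · exfalso
          rw [zero_smul, zero_add] at hsr
          have hr : r ≠ 0 := hne rfl
          exact (hxdne d) ((smul_eq_zero.mp hsr).resolve_left hr)
        · rw [Submodule.mem_span_singleton]
          refine ⟨-r / s, ?_⟩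
          have h' : s • u = (-r) • x ^ d := by
            rw [neg_smul]
            exact eq_neg_of_add_eq_zero_left hsr
          have : u = (-r / s) • x ^ d := by
            calc u = s⁻¹ • (s • u) := by rw [smul_smul, inv_mul_cancel₀ hs, one_smul]
            _ = s⁻¹ • ((-r) • x ^ d) := by rw [h']
            _ = (-r / s) • x ^ d := by rw [smul_smul, div_eq_inv_mul]
          exact this.symm
      · rw [Submodule.span_le, Set.singleton_subset_iff]
        exact hxd d
  have htr : Transcendental ℂ x := by
    intro halg
    have halgK : IsAlgebraic ℂ ((IsScalarTower.toAlgHom ℂ B (FractionRing B)) x) :=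
      halg.algHom _
    obtain ⟨c0, hc0⟩ := aux_alg_range halgK
    have hx' : x = algebraMap ℂ B c0 := by
      apply IsFractionRing.injective B (FractionRing B)
      rw [← IsScalarTower.algebraMap_apply ℂ B (FractionRing B)]
      exact hc0.symm
    have hx0' : x ∈ ℬ 0 := by
      rw [h0, Submodule.mem_span_singleton]
      exact ⟨c0, by rw [hx', Algebra.smul_def, mul_one]⟩
    exact hx0 (aux_two_deg ℬ hx1 hx0' one_ne_zero)
  have hinj2 : Function.Injective (aeval x : ℂ[X] →ₐ[ℂ] B) :=
    transcendental_iff_injective.mp htr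
  have hsurj : Function.Surjective (aeval x : ℂ[X] →ₐ[ℂ] B) := by
    intro b
    have hb : b ∈ Subalgebra.toSubmodule (aeval x : ℂ[X] →ₐ[ℂ] B).range := by
      have htop : (⊤ : Submodule ℂ B) = iSup ℬ :=
        ((DirectSum.Decomposition.isInternal ℬ).submodule_iSup_eq_top).symm
      have hmem : b ∈ (⊤ : Submodule ℂ B) := trivial
      rw [htop] at hmem
      have hle : iSup ℬ ≤ Subalgebra.toSubmodule (aeval x : ℂ[X] →ₐ[ℂ] B).range := by
        refine iSup_le fun d => ?_
        rw [hspan d, Submodule.span_le, Set.singleton_subset_iff]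
        exact ⟨X ^ d, by simp⟩
      exact hle hmem
    obtain ⟨p, hp⟩ := hb
    exact ⟨p, hp⟩
  set iso : ℂ[X] ≃ₐ[ℂ] B := AlgEquiv.ofBijective (aeval x) ⟨hinj2, hsurj⟩ with hiso
  have hisoX : iso X = x := by
    rw [hiso]
    show (aeval x : ℂ[X] →ₐ[ℂ] B) X = x
    rw [aeval_X]
  have hex : ∀ d : ℕ, iso.symm (x ^ d) = X ^ d := by
    intro d
    apply iso.injective
    rw [AlgEquiv.apply_symm_apply, map_pow, hisoX]
  constructor
  · refine ⟨iso.symm, fun d => ?_⟩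
    rw [hspan d, Submodule.map_span, Set.image_singleton]
    congr 1
    congr 1
    exact hex d
  · intro d hd
    rw [hspan d]
    exact finrank_span_singleton (hxdne d)
end

section
/- If A and B are graded C-algebras that are integral domains, then the Segre product A ⊠ B = ⊕_{d≥0} A_d ⊗_C B_d is an integral domain. -/
/-!
The Segre product is a subring of `A ⊗[ℂ] B`, so it suffices that the tensor product of two
domains over an algebraically closed field `k` has no zero divisors. Any two elements of
`A ⊗[k] B` come from `C ⊗[k] B` for a finitely generated subalgebra `C ⊆ A`, and
`C ⊗[k] B → A ⊗[k] B` is injective because `B` is flat over `k`. Write `x = ∑ αᵢ ⊗ eᵢ` and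
`y = ∑ γⱼ ⊗ eⱼ` in a `k`-basis of `B`. If `αᵢ γⱼ ≠ 0`, the Nullstellensatz gives a `k`-point `φ`
of `C` with `φ (αᵢ γⱼ) ≠ 0`, and `φ ⊗ id` turns `x y = 0` into a product of two nonzero elements
of the domain `B`.
-/

open TensorProduct

/-- The degree-`d` piece of the Segre product `A ⊠ B`, realized inside `A ⊗[ℂ] B`. -/
noncomputable def segrePiece {A B : Type} [CommRing A] [CommRing B]
    [Algebra ℂ A] [Algebra ℂ B]
    (𝒜 : ℕ → Submodule ℂ A) (ℬ : ℕ → Submodule ℂ B) (d : ℕ) :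
    Submodule ℂ (A ⊗[ℂ] B) :=
  Submodule.span ℂ {z : A ⊗[ℂ] B | ∃ a ∈ 𝒜 d, ∃ b ∈ ℬ d, z = a ⊗ₜ[ℂ] b}

section

variable {k : Type*} [Field k]

theorem exists_algHom_apply_ne_zero [IsAlgClosed k] {C : Type*} [CommRing C] [IsDomain C]
    [Algebra k C] [Algebra.FiniteType k C] {a : C} (ha : a ≠ 0) :
    ∃ φ : C →ₐ[k] k, φ a ≠ 0 := by
  have : IsJacobsonRing C := isJacobsonRing_of_finiteType (A := k)
  have hjac : (⊥ : Ideal C).jacobson = ⊥ :=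
    isJacobsonRing_iff_prime_eq.mp ‹_› ⊥ Ideal.isPrime_bot
  obtain ⟨M, ⟨-, hM⟩, haM⟩ : ∃ M : Ideal C, (⊥ ≤ M ∧ M.IsMaximal) ∧ a ∉ M := by
    have : a ∉ (⊥ : Ideal C).jacobson := by rwa [hjac, Ideal.mem_bot]
    simpa [Ideal.jacobson, Ideal.mem_sInf] using this
  let := Ideal.Quotient.field M
  have := finite_of_finite_type_of_isJacobsonRing k (C ⧸ M)
  let ψ := AlgEquiv.ofBijective (Algebra.ofId k (C ⧸ M))
    IsAlgClosed.algebraMap_bijective_of_isIntegral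
  exact ⟨(ψ.symm : C ⧸ M →ₐ[k] k).comp (Ideal.Quotient.mkₐ k M), by
    simpa [Ideal.Quotient.eq_zero_iff_mem] using haM⟩

theorem Algebra.TensorProduct.basis_repr_map {R A C B ι : Type*} [CommRing R] [CommRing A]
    [CommRing C] [CommRing B] [Algebra R A] [Algebra R C] [Algebra R B]
    (e : Module.Basis ι R B) (f : C →ₐ[R] A) (t : C ⊗[R] B) (i : ι) :
    (basis A e).repr (map f (AlgHom.id R B) t) i = f ((basis C e).repr t i) := by
  induction t using TensorProduct.induction_on with
  | zero => simp
  | tmul c b => simp [basis_repr_tmul]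
  | add s t hs ht => simp [hs, ht]

theorem noZeroDivisors_tensorProduct_of_finiteType [IsAlgClosed k] (C B : Type*) [CommRing C]
    [IsDomain C] [Algebra k C] [Algebra.FiniteType k C] [CommRing B] [IsDomain B] [Algebra k B] :
    NoZeroDivisors (C ⊗[k] B) := by
  refine ⟨fun {x y} hxy => ?_⟩
  by_contra! hne
  let b := Algebra.TensorProduct.basis C (Module.Free.chooseBasis k B)
  obtain ⟨i, hi⟩ := Finsupp.ne_iff.mp (b.repr.map_ne_zero_iff.mpr hne.1)
  obtain ⟨j, hj⟩ := Finsupp.ne_iff.mp (b.repr.map_ne_zero_iff.mpr hne.2)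
  obtain ⟨φ, hφ⟩ := exists_algHom_apply_ne_zero (k := k) (mul_ne_zero hi hj)
  let g := (Algebra.TensorProduct.lid k B).toAlgHom.comp
    (Algebra.TensorProduct.map φ (AlgHom.id k B))
  have repr_eq_zero : ∀ t, g t = 0 → ∀ l, φ (b.repr t l) = 0 := by
    intro t ht l
    have : Algebra.TensorProduct.map φ (AlgHom.id k B) t = 0 := by
      simpa [g] using ht
    rw [← Algebra.TensorProduct.basis_repr_map, this]
    simp
  rw [map_mul] at hφ
  rcases mul_eq_zero.mp (show g x * g y = 0 by rw [← map_mul, hxy, map_zero]) with h | h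
  · exact left_ne_zero_of_mul hφ (repr_eq_zero x h i)
  · exact right_ne_zero_of_mul hφ (repr_eq_zero y h j)

theorem noZeroDivisors_tensorProduct_of_forall_fg (A B : Type*) [CommRing A] [Algebra k A]
    [CommRing B] [Algebra k B] (h : ∀ C : Subalgebra k A, C.FG → NoZeroDivisors (C ⊗[k] B)) :
    NoZeroDivisors (A ⊗[k] B) := by
  refine ⟨fun {x y} hxy => ?_⟩
  obtain ⟨M, ⟨s, rfl⟩, hsub⟩ :=
    Submodule.exists_fg_le_subset_range_rTensor_subtype {x, y} (Set.toFinite _)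
  let C := Algebra.adjoin k (s : Set A)
  let F := Algebra.TensorProduct.map C.val (AlgHom.id k B)
  have hF : Function.Injective F :=
    Module.Flat.rTensor_preserves_injective_linearMap C.val.toLinearMap Subtype.val_injective
  have hrange : ∀ z ∈ ({x, y} : Set (A ⊗[k] B)), ∃ z' : C ⊗[k] B, F z' = z := by
    intro z hz
    obtain ⟨z', rfl⟩ := hsub hz
    refine ⟨LinearMap.rTensor B (Submodule.inclusion (Algebra.span_le_adjoin k _)) z', ?_⟩
    change LinearMap.rTensor B C.val.toLinearMap _ = _
    rw [← LinearMap.rTensor_comp_apply]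
    rfl
  obtain ⟨x', rfl⟩ := hrange x (by simp)
  obtain ⟨y', rfl⟩ := hrange y (by simp)
  have := h C ⟨s, rfl⟩
  rw [← map_mul, ← map_zero F] at hxy
  rcases mul_eq_zero.mp (hF hxy) with rfl | rfl <;> simp

theorem noZeroDivisors_tensorProduct [IsAlgClosed k] (A B : Type*) [CommRing A] [IsDomain A]
    [Algebra k A] [CommRing B] [IsDomain B] [Algebra k B] : NoZeroDivisors (A ⊗[k] B) :=
  noZeroDivisors_tensorProduct_of_forall_fg A B fun C hC =>
    have : Algebra.FiniteType k C := Subalgebra.fg_iff_finiteType C |>.mp hC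
    noZeroDivisors_tensorProduct_of_finiteType C B

end

theorem segreProduct_isDomain_general
    (A B : Type) [CommRing A] [CommRing B] [Algebra ℂ A] [Algebra ℂ B]
    [IsDomain A] [IsDomain B]
    (𝒜 : ℕ → Submodule ℂ A) (ℬ : ℕ → Submodule ℂ B) :
    ∀ x y : A ⊗[ℂ] B, x ∈ (⨆ d : ℕ, segrePiece 𝒜 ℬ d) →
      y ∈ (⨆ d : ℕ, segrePiece 𝒜 ℬ d) → x * y = 0 → x = 0 ∨ y = 0 := by
  have := noZeroDivisors_tensorProduct (k := ℂ) A B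
  exact fun x y _ _ hxy => mul_eq_zero.mp hxy

/-- If `A` and `B` are graded `ℂ`-algebras which are integral
domains, then the Segre product `A ⊠ B = ⊕_d A_d ⊗ B_d` (realized inside
`A ⊗[ℂ] B`) is an integral domain: it has no zero divisors. -/
theorem segreProduct_isDomain
    (A B : Type) [CommRing A] [CommRing B] [Algebra ℂ A] [Algebra ℂ B]
    [IsDomain A] [IsDomain B]
    (𝒜 : ℕ → Submodule ℂ A) (ℬ : ℕ → Submodule ℂ B)
    [GradedAlgebra 𝒜] [GradedAlgebra ℬ] :
    ∀ x y : A ⊗[ℂ] B, x ∈ (⨆ d : ℕ, segrePiece 𝒜 ℬ d) →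
      y ∈ (⨆ d : ℕ, segrePiece 𝒜 ℬ d) → x * y = 0 → x = 0 ∨ y = 0 :=
  segreProduct_isDomain_general A B 𝒜 ℬ
end

section
/- Suppose that for partitions α, β, γ with |α| = |β| = |γ|, the graded C-algebra B_{α,β,γ} = ⊕_{d≥0} K_{dα,dβ,dγ} (with multiplication constructed via invariant theory) is a finitely generated graded integral domain, and that g_{dα,dβ,dγ} = 1 for all d > 0. Then for any partitions λ, μ, ν with |λ| = |μ| = |ν|, the sequence d ↦ g_{λ+dα, μ+dβ, ν+dγ} is constant for d ≫ 0, provided N = ⊕_{d≥0} K_{dα+λ, dβ+μ, dγ+ν} is a finitely generated torsion-free graded B_{α,β,γ}-module. -/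
/-- Suppose the graded `ℂ`-algebra
`B = B_{α,β,γ} = ⊕_{d≥0} K_{dα,dβ,dγ}` (whose degree-`d` piece `ℬ d` is the
Kronecker multiplicity space, so `dim ℬ d = g_{dα,dβ,dγ}`) is a finitely
generated graded integral domain with `g_{dα,dβ,dγ} = 1` for all `d > 0`, and
that `N = ⊕_{d≥0} K_{dα+λ,dβ+μ,dγ+ν}` (with `dim 𝒩 d = g_{dα+λ,dβ+μ,dγ+ν}`) is
a finitely generated torsion-free graded `B`-module.  Then the sequence
`d ↦ g_{λ+dα,μ+dβ,ν+dγ} = dim_ℂ 𝒩 d` is constant for `d ≫ 0`. -/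
theorem kronecker_stability_of_one_dimensional_graded_pieces
    (B : Type) [CommRing B] [IsDomain B] [Algebra ℂ B]
    (ℬ : ℕ → Submodule ℂ B) [GradedAlgebra ℬ]
    (hfg : Algebra.FiniteType ℂ B)
    (h0 : ℬ 0 = Submodule.span ℂ {1})
    -- `g_{dα,dβ,dγ} = 1` for all `d > 0`:
    (h1 : ∀ d : ℕ, 0 < d → Module.finrank ℂ (ℬ d) = 1)
    (N : Type) [AddCommGroup N] [Module ℂ N] [Module B N]
    [IsScalarTower ℂ B N] [SMulCommClass B ℂ N]
    (𝒩 : ℕ → Submodule ℂ N)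
    (hinternal : DirectSum.IsInternal 𝒩)
    (hgr : ∀ (d e : ℕ) (b : B) (n : N), b ∈ ℬ d → n ∈ 𝒩 e → b • n ∈ 𝒩 (d + e))
    (hNfg : Module.Finite B N)
    (htf : ∀ (b : B) (n : N), b • n = 0 → b = 0 ∨ n = 0)
    -- the Kronecker coefficients `g_{λ+dα, μ+dβ, ν+dγ}`:
    (g : ℕ → ℕ) (hg : ∀ d : ℕ, g d = Module.finrank ℂ (𝒩 d)) :
    ∃ D c : ℕ, ∀ d : ℕ, D ≤ d → g d = c := by
  classical
  -- a nonzero element of degree 1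
  have hnt : Nontrivial (ℬ 1) := by
    have := h1 1 one_pos
    exact Module.nontrivial_of_finrank_pos (R := ℂ) (by omega)
  obtain ⟨v, hv⟩ := exists_ne (0 : ℬ 1)
  set x : B := (v : B) with hxdef
  have hxmem : x ∈ ℬ 1 := v.2
  have hxne : x ≠ 0 := fun h => hv (Subtype.ext h)
  have hxpow : ∀ e : ℕ, x ^ e ∈ ℬ e := by
    intro e
    simpa using SetLike.pow_mem_graded e hxmem
  have hxpowne : ∀ e : ℕ, x ^ e ≠ 0 := fun e => pow_ne_zero e hxne
  -- every homogeneous element of degree e is a scalar multiple of x ^ e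
  have hspan : ∀ (e : ℕ) (y : B), y ∈ ℬ e → ∃ c : ℂ, y = c • x ^ e := by
    intro e y hy
    rcases Nat.eq_zero_or_pos e with rfl | he
    · rw [h0] at hy
      obtain ⟨c, hc⟩ := Submodule.mem_span_singleton.1 hy
      exact ⟨c, by rw [← hc, pow_zero]⟩
    · have hne : (⟨x ^ e, hxpow e⟩ : ℬ e) ≠ 0 := by
        intro h
        exact hxpowne e (congrArg Subtype.val h)
      obtain ⟨c, hc⟩ := (finrank_eq_one_iff_of_nonzero' (⟨x ^ e, hxpow e⟩ : ℬ e) hne).1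
        (h1 e he) ⟨y, hy⟩
      refine ⟨c, ?_⟩
      have := congrArg Subtype.val hc
      simpa using this.symm
  -- the projection to the degree-d graded piece of N
  let E := LinearEquiv.ofBijective (DirectSum.coeLinearMap 𝒩) hinternal
  let proj : ℕ → N →ₗ[ℂ] N := fun d =>
    (𝒩 d).subtype ∘ₗ (DirectSum.component ℂ ℕ (fun i => ↥(𝒩 i)) d) ∘ₗ E.symm.toLinearMap
  have hproj_apply : ∀ d n, proj d n = ((E.symm n) d : N) := fun d n => rfl
  have hproj_same : ∀ d (n : N), n ∈ 𝒩 d → proj d n = n := by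
    intro d n hn
    rw [hproj_apply, hinternal.ofBijective_coeLinearMap_of_mem hn]
  have hproj_ne : ∀ (d e : ℕ) (n : N), n ∈ 𝒩 e → e ≠ d → proj d n = 0 := by
    intro d e n hn hne
    rw [hproj_apply, hinternal.ofBijective_coeLinearMap_of_mem_ne hne hn]
    simp
  -- a finite set of homogeneous generators
  obtain ⟨S, hS⟩ := Module.finite_def.mp hNfg
  set T : Finset N := S.biUnion (fun s => (E.symm s).support.image fun i => ((E.symm s i : ↥(𝒩 i)) : N)) with hTdef
  have hT : ∀ t ∈ T, ∃ e : ℕ, t ∈ 𝒩 e := by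
    intro t ht
    rw [hTdef, Finset.mem_biUnion] at ht
    obtain ⟨s, _, ht⟩ := ht
    obtain ⟨i, _, rfl⟩ := Finset.mem_image.mp ht
    exact ⟨i, (E.symm s i).2⟩
  have hsum : ∀ f : DirectSum ℕ (fun i => ↥(𝒩 i)), (∑ i ∈ DFinsupp.support f, ((f i : N))) = DirectSum.coeLinearMap 𝒩 f := by
    intro f
    conv_rhs => rw [← DirectSum.sum_support_of f]
    rw [map_sum]
    exact Finset.sum_congr rfl fun i _ => (DirectSum.coeLinearMap_of 𝒩 i (f i)).symm
  have hSspan : ∀ s ∈ S, s ∈ Submodule.span ℂ (T : Set N) := by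
    intro s hs
    have : (∑ i ∈ DFinsupp.support (E.symm s), ((E.symm s i : N))) = s := by
      rw [hsum]
      exact E.apply_symm_apply s
    rw [← this]
    refine Submodule.sum_mem _ fun i hi => Submodule.subset_span ?_
    rw [hTdef]
    exact Finset.mem_coe.mpr (Finset.mem_biUnion.mpr ⟨s, hs, Finset.mem_image.mpr ⟨i, hi, rfl⟩⟩)
  -- N is spanned over ℂ by the x^i • t
  set U : Set N := ⋃ t ∈ (T : Set N), Set.range (fun i : ℕ => x ^ i • t) with hUdef
  set P := Submodule.span ℂ U with hPdef
  have hUP : ∀ t ∈ T, ∀ i : ℕ, x ^ i • t ∈ P := fun t ht i =>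
    Submodule.subset_span (Set.mem_biUnion ht ⟨i, rfl⟩)
  have hmemU : ∀ u ∈ U, ∃ t ∈ T, ∃ i : ℕ, u = x ^ i • t := by
    intro u hu
    rw [hUdef] at hu
    obtain ⟨t, ht, hi⟩ := Set.mem_iUnion₂.mp hu
    obtain ⟨j, hj⟩ := hi
    exact ⟨t, ht, j, hj.symm⟩
  have hBsmulP : ∀ (b : B) (t : N), t ∈ T → b • t ∈ P := by
    intro b t ht
    rw [← DirectSum.sum_support_decompose ℬ b, Finset.sum_smul]
    refine Submodule.sum_mem _ fun e he => ?_
    obtain ⟨c, hc⟩ := hspan e _ (DirectSum.decompose ℬ b e).2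
    rw [hc, smul_assoc]
    exact Submodule.smul_mem _ _ (hUP t ht e)
  have hPstable : ∀ (b : B), ∀ p ∈ P, b • p ∈ P := by
    intro b p hp
    induction hp using Submodule.span_induction with
    | mem u hu =>
        obtain ⟨t, ht, i, rfl⟩ := hmemU u hu
        rw [← mul_smul]
        exact hBsmulP _ t ht
    | zero => simpa using P.zero_mem
    | add p q _ _ hp' hq' => rw [smul_add]; exact add_mem hp' hq'
    | smul c p _ hp' => rw [smul_comm]; exact Submodule.smul_mem _ _ hp'
  have htop : ∀ n : N, n ∈ P := by
    intro n
    let W : Submodule B N :=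
      { carrier := P
        add_mem' := fun ha hb => P.add_mem ha hb
        zero_mem' := P.zero_mem
        smul_mem' := fun b p hp => hPstable b p hp }
    have hTP : Submodule.span ℂ (T : Set N) ≤ P := by
      refine Submodule.span_le.2 fun t ht => ?_
      have := hUP t ht 0
      rwa [pow_zero, one_smul] at this
    have hle : (⊤ : Submodule B N) ≤ W := by
      rw [← hS]
      exact Submodule.span_le.2 fun s hs => hTP (hSspan s hs)
    exact hle trivial
  -- per-degree bound and finite-dimensionality
  have hbound : ∀ d : ℕ, FiniteDimensional ℂ ↥(𝒩 d) ∧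
      Module.finrank ℂ ↥(𝒩 d) ≤ T.card + 1 := by
    intro d
    set Vd : Finset N :=
      insert 0 (T.attach.image fun t : {y // y ∈ T} => x ^ (d - Classical.choose (hT t t.2)) • (t : N)) with hVd
    have hcard : Vd.card ≤ T.card + 1 := by
      refine (Finset.card_insert_le _ _).trans ?_
      have h := Finset.card_image_le (s := T.attach)
        (f := fun t : {y // y ∈ T} => x ^ (d - Classical.choose (hT t t.2)) • (t : N))
      simp only [Finset.card_attach] at h
      omega
    have hsub : 𝒩 d ≤ Submodule.span ℂ (Vd : Set N) := by
      intro n hn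
      have himg : (proj d) '' U ⊆ ↑(Submodule.span ℂ (Vd : Set N)) := by
        rintro _ ⟨u, hu, rfl⟩
        obtain ⟨t, ht, i, rfl⟩ := hmemU u hu
        have he : t ∈ 𝒩 (Classical.choose (hT t ht)) := Classical.choose_spec (hT t ht)
        set e := Classical.choose (hT t ht) with hedef
        have hmem : x ^ i • t ∈ 𝒩 (i + e) := hgr i e _ _ (hxpow i) he
        by_cases hde : i + e = d
        · have hi : i = d - e := by omega
          subst hi
          have hmem' : x ^ (d - e) • t ∈ 𝒩 d := by rw [hde] at hmem; exact hmem
          rw [hproj_same d _ hmem']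
          apply Submodule.subset_span
          rw [hVd]
          exact Finset.mem_coe.mpr (Finset.mem_insert_of_mem
            (Finset.mem_image_of_mem _ (Finset.mem_attach T ⟨t, ht⟩)))
        · rw [hproj_ne d (i + e) _ hmem hde]
          exact Submodule.zero_mem _
      have h1' : proj d n ∈ Submodule.map (proj d) P := Submodule.mem_map_of_mem (htop n)
      rw [hPdef, Submodule.map_span] at h1'
      have h2' : Submodule.span ℂ ((proj d) '' U) ≤ Submodule.span ℂ (Vd : Set N) :=
        Submodule.span_le.2 himg
      have := h2' h1'
      rwa [hproj_same d n hn] at this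
    haveI : FiniteDimensional ℂ ↥(Submodule.span ℂ (Vd : Set N)) :=
      FiniteDimensional.span_finset ℂ Vd
    refine ⟨Submodule.finiteDimensional_of_le hsub, ?_⟩
    refine (Submodule.finrank_mono hsub).trans ?_
    exact (finrank_span_finset_le_card Vd).trans hcard
  -- multiplication by x is injective and raises degree by one
  have hmono : ∀ d : ℕ, Module.finrank ℂ ↥(𝒩 d) ≤ Module.finrank ℂ ↥(𝒩 (d + 1)) := by
    intro d
    haveI := (hbound (d + 1)).1
    let L : ↥(𝒩 d) →ₗ[ℂ] ↥(𝒩 (d + 1)) :=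
      { toFun := fun n => ⟨x • (n : N), by
          have := hgr 1 d x n hxmem n.2
          rwa [Nat.add_comm] at this⟩
        map_add' := fun a b => Subtype.ext (smul_add x (a : N) (b : N))
        map_smul' := fun c a => Subtype.ext (smul_comm x c (a : N)) }
    have hinj : Function.Injective L := by
      intro a b hab
      have hab' : x • ((a : N) - (b : N)) = 0 := by
        have := congrArg Subtype.val hab
        simp only [L, LinearMap.coe_mk, AddHom.coe_mk] at this
        rw [smul_sub, this, sub_self]
      rcases htf x _ hab' with h | h
      · exact absurd h hxne
      · exact Subtype.ext (by rwa [sub_eq_zero] at h)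
    exact LinearMap.finrank_le_finrank_of_injective hinj
  -- a monotone bounded sequence of naturals is eventually constant
  by_contra hcon
  push_neg at hcon
  have hmonof : Monotone fun d => Module.finrank ℂ ↥(𝒩 d) := monotone_nat_of_le_succ hmono
  have grow : ∀ D : ℕ, ∃ d, D ≤ d ∧
      Module.finrank ℂ ↥(𝒩 D) < Module.finrank ℂ ↥(𝒩 d) := by
    intro D
    obtain ⟨d, hd, hne⟩ := hcon D (g D)
    refine ⟨d, hd, ?_⟩
    have h1' := hmonof hd
    have h2' := hg d
    have h3' := hg D
    simp only at h1'
    omega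
  have key : ∀ n : ℕ, ∃ d, n ≤ Module.finrank ℂ ↥(𝒩 d) := by
    intro n
    induction n with
    | zero => exact ⟨0, Nat.zero_le _⟩
    | succ n ih =>
        obtain ⟨d, hd⟩ := ih
        obtain ⟨d', hdd', hlt⟩ := grow d
        exact ⟨d', by omega⟩
  obtain ⟨d, hd⟩ := key (T.card + 2)
  have := (hbound d).2
  omega
end
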